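/- arXiv:1403.7547 — 3 statements merged into one kernel-verified Lean document; each statement's English description precedes it below -/
import Mathlib

section
/- Discrete comparison principle: Let h, τ > 0 with τ ≤ h²/2, let I be a positive integer, and let sequences b_{i,n} ≥ 0 and c_{i,n} with h ≤ 2/max_i |c_{i,n}| for all n. Suppose V_{i,n} (0 ≤ i ≤ I, n ≥ 0) satisfies: (V_{i,n+1} - V_{i,n})/τ - (V_{i-1,n} - 2V_{i,n} + V_{i+1,n})/h² - b_{i,n}V_{i,n} - c_{i,n}(V_{i+1,n} - V_{i-1,n})/(2h) ≥ 0 for 1 ≤ i ≤ I-1, with the symmetric convention at i = 0 that the discrete Laplacian is (2V_{1,n} - 2V_{0,n})/h² and the discrete gradient is 0, and V_{i,0} ≥ 0 for all i, V_{I,n} ≥ 0 for all n. Then V_{i,n} ≥ 0 for all 0 ≤ i ≤ I and all n ≥ 0. -/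
private lemma dcp_aux (h τ Vm V Vp K b c : ℝ) (hh : 0 < h) (hτ0 : 0 < τ)
    (hτ : τ ≤ h ^ 2 / 2) (hb : 0 ≤ b) (hc : h * |c| ≤ 2)
    (hVm : 0 ≤ Vm) (hV : 0 ≤ V) (hVp : 0 ≤ Vp)
    (hint : 0 ≤ (K - V) / τ - (Vm - 2 * V + Vp) / h ^ 2 - b * V -
      c * (Vp - Vm) / (2 * h)) : 0 ≤ K := by
  have habs : |h * c| ≤ 2 := by rwa [abs_mul, abs_of_pos hh]
  obtain ⟨hc1, hc2⟩ := abs_le.mp habs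
  have key : 0 ≤ 2 * h ^ 2 * τ * ((K - V) / τ - (Vm - 2 * V + Vp) / h ^ 2 - b * V -
      c * (Vp - Vm) / (2 * h)) := mul_nonneg (by positivity) hint
  have e : 2 * h ^ 2 * τ * ((K - V) / τ - (Vm - 2 * V + Vp) / h ^ 2 - b * V -
      c * (Vp - Vm) / (2 * h)) =
      2 * h ^ 2 * (K - V) - 2 * τ * (Vm - 2 * V + Vp) - 2 * h ^ 2 * τ * b * V -
      h * τ * c * (Vp - Vm) := by
    field_simp
  rw [e] at key
  have c1 : 0 ≤ τ * (2 - h * c) * Vm := by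
    apply mul_nonneg (mul_nonneg hτ0.le (by linarith)) hVm
  have c2 : 0 ≤ τ * (2 + h * c) * Vp := by
    apply mul_nonneg (mul_nonneg hτ0.le (by linarith)) hVp
  have c3 : 0 ≤ (2 * h ^ 2 - 4 * τ) * V := mul_nonneg (by nlinarith) hV
  have c4 : 0 ≤ 2 * h ^ 2 * τ * b * V := by positivity
  nlinarith [sq_nonneg h, hh.le]

private lemma dcp_aux0 (h τ V Vp K b : ℝ) (hh : 0 < h) (hτ0 : 0 < τ)
    (hτ : τ ≤ h ^ 2 / 2) (hb : 0 ≤ b) (hV : 0 ≤ V) (hVp : 0 ≤ Vp)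
    (hint : 0 ≤ (K - V) / τ - (2 * Vp - 2 * V) / h ^ 2 - b * V) : 0 ≤ K := by
  have key : 0 ≤ h ^ 2 * τ * ((K - V) / τ - (2 * Vp - 2 * V) / h ^ 2 - b * V) :=
    mul_nonneg (by positivity) hint
  have e : h ^ 2 * τ * ((K - V) / τ - (2 * Vp - 2 * V) / h ^ 2 - b * V) =
      h ^ 2 * (K - V) - τ * (2 * Vp - 2 * V) - h ^ 2 * τ * b * V := by
    field_simp
  rw [e] at key
  have c1 : 0 ≤ (h ^ 2 - 2 * τ) * V := mul_nonneg (by nlinarith) hV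
  have c2 : 0 ≤ 2 * τ * Vp := by positivity
  have c3 : 0 ≤ h ^ 2 * τ * b * V := by positivity
  nlinarith [sq_nonneg h]

/-- Discrete comparison (maximum) principle for the explicit Euler scheme, with the
symmetric convention at `i = 0`, under the CFL condition `τ ≤ h²/2` and the mesh
restriction `h·|c| ≤ 2`. -/
theorem discrete_comparison_principle
    (h τ : ℝ) (hh : 0 < h) (hτ0 : 0 < τ) (hτ : τ ≤ h ^ 2 / 2)
    (I : ℕ) (hI : 1 ≤ I)
    (b c V : ℕ → ℕ → ℝ)
    (hb : ∀ i n, 0 ≤ b i n)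
    (hc : ∀ i n, i ≤ I → h * |c i n| ≤ 2)
    (hint : ∀ i n, 1 ≤ i → i ≤ I - 1 →
      0 ≤ (V i (n + 1) - V i n) / τ -
            (V (i - 1) n - 2 * V i n + V (i + 1) n) / h ^ 2 -
            b i n * V i n - c i n * (V (i + 1) n - V (i - 1) n) / (2 * h))
    (h0 : ∀ n, 0 ≤ (V 0 (n + 1) - V 0 n) / τ -
            (2 * V 1 n - 2 * V 0 n) / h ^ 2 - b 0 n * V 0 n)
    (hinit : ∀ i, i ≤ I → 0 ≤ V i 0)
    (hbdry : ∀ n, 0 ≤ V I n) :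
    ∀ i n, i ≤ I → 0 ≤ V i n := by
  intro i n
  induction n generalizing i with
  | zero => exact hinit i
  | succ n ih =>
    intro hi
    rcases eq_or_lt_of_le hi with rfl | hlt
    · exact hbdry (n + 1)
    rcases Nat.eq_zero_or_pos i with rfl | hpos
    · have h1I : (1 : ℕ) ≤ I := hI
      exact dcp_aux0 h τ (V 0 n) (V 1 n) (V 0 (n + 1)) (b 0 n) hh hτ0 hτ (hb 0 n)
        (ih 0 (Nat.zero_le I)) (ih 1 h1I) (h0 n)
    · have hi1 : i ≤ I - 1 := Nat.le_sub_one_of_lt hlt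
      have hip : i + 1 ≤ I := hlt
      have him : i - 1 ≤ I := le_trans (Nat.sub_le i 1) hi
      exact dcp_aux h τ (V (i - 1) n) (V i n) (V (i + 1) n) (V i (n + 1))
        (b i n) (c i n) hh hτ0 hτ (hb i n) (hc i n hi)
        (ih (i - 1) him) (ih i hi) (ih (i + 1) hip)
        (hint i n hpos hi1)
end

section
/- Positivity of the explicit Euler scheme for the nonlinear heat equation with gradient term: Let p > 1, 1 ≤ q < 2, β ∈ ℝ, h, τ > 0 with τ ≤ h²/2, and in the case β < 0 assume h ≤ (2^q / (|β| M₀^{q-1}))^{1/(2-q)} where M₀ = max over 0 ≤ n ≤ N of max_i |V_{i,n}|. Suppose V_{i,n} solves the scheme V_{i,n+1} = V_{i,n} + τ[(V_{i-1,n} - 2V_{i,n} + V_{i+1,n})/h² + |V_{i,n}|^{p-1}V_{i,n} + β|(V_{i+1,n} - V_{i-1,n})/(2h)|^q] for 1 ≤ i ≤ I-1, with symmetric convention at i = 0 (discrete Laplacian (2V_{1,n} - 2V_{0,n})/h², discrete gradient 0), V_{i,0} ≥ 0 for all i, and boundary V_{I,n} ≥ 0 for all n ≤ N. Then V_{i,n}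 ≥ 0 for all i and all n ≤ N. -/
lemma aux_scalar (q β h M₀ : ℝ) (hq1 : 1 ≤ q) (hq2 : q < 2) (hh : 0 < h)
    (hβ : β < 0) (hM : 0 < M₀)
    (hmesh : h ≤ (2 ^ q / (|β| * M₀ ^ (q - 1))) ^ (1 / (2 - q))) :
    |β| * (M₀ / (2 * h)) ^ (q - 1) * (1 / (2 * h)) ≤ 1 / h ^ 2 := by
  have h2h : (0:ℝ) < 2 * h := by linarith
  have hβpos : (0:ℝ) < |β| := abs_pos.mpr (ne_of_lt hβ)
  have hMq : (0:ℝ) < M₀ ^ (q - 1) := Real.rpow_pos_of_pos hM _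
  have hC : (0:ℝ) < 2 ^ q / (|β| * M₀ ^ (q - 1)) :=
    div_pos (Real.rpow_pos_of_pos two_pos q) (mul_pos hβpos hMq)
  have h2q : (0:ℝ) < 2 - q := by linarith
  have hK : h ^ (2 - q) ≤ 2 ^ q / (|β| * M₀ ^ (q - 1)) := by
    have := Real.rpow_le_rpow hh.le hmesh h2q.le
    rwa [← Real.rpow_mul hC.le, one_div, inv_mul_cancel₀ (ne_of_gt h2q),
      Real.rpow_one] at this
  -- so |β| * M₀^(q-1) * h^(2-q) ≤ 2^q
  have hK2 : |β| * M₀ ^ (q - 1) * h ^ (2 - q) ≤ 2 ^ q := by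
    rw [div_eq_mul_inv] at hK
    calc |β| * M₀ ^ (q - 1) * h ^ (2 - q)
        ≤ |β| * M₀ ^ (q - 1) * (2 ^ q * (|β| * M₀ ^ (q - 1))⁻¹) := by
          apply mul_le_mul_of_nonneg_left hK (by positivity)
      _ = 2 ^ q := by field_simp
  -- rewrite things in terms of h^q
  have hhq : (0:ℝ) < h ^ q := Real.rpow_pos_of_pos hh q
  have h2qpow : (0:ℝ) < (2:ℝ) ^ q := Real.rpow_pos_of_pos two_pos q
  have hsplit : h ^ (2 - q) = h ^ 2 / h ^ q := by
    rw [Real.rpow_sub hh]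
    norm_num [Real.rpow_natCast]
  have hdiv : (M₀ / (2 * h)) ^ (q - 1) = M₀ ^ (q - 1) / (2 * h) ^ (q - 1) :=
    Real.div_rpow hM.le h2h.le _
  have hmulpow : (2 * h) ^ (q - 1) * (2 * h) = (2:ℝ) ^ q * h ^ q := by
    rw [← Real.rpow_add_one (ne_of_gt h2h), sub_add_cancel, Real.mul_rpow (by norm_num) hh.le]
  have h2hq : (0:ℝ) < (2 * h) ^ (q - 1) := Real.rpow_pos_of_pos h2h _
  have hh2 : (0:ℝ) < h ^ 2 := by positivity
  rw [hsplit] at hK2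
  -- target
  rw [hdiv, show |β| * (M₀ ^ (q - 1) / (2 * h) ^ (q - 1)) * (1 / (2 * h))
      = |β| * M₀ ^ (q - 1) / ((2 * h) ^ (q - 1) * (2 * h)) by ring,
    div_le_div_iff₀ (by positivity) hh2]
  calc |β| * M₀ ^ (q - 1) * h ^ 2
      ≤ 2 ^ q * h ^ q := by
        have h1 : |β| * M₀ ^ (q - 1) * (h ^ 2 / h ^ q) * h ^ q ≤ 2 ^ q * h ^ q :=
          mul_le_mul_of_nonneg_right hK2 hhq.le
        have h2 : |β| * M₀ ^ (q - 1) * (h ^ 2 / h ^ q) * h ^ q = |β| * M₀ ^ (q - 1) * h ^ 2 := by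
          field_simp
        linarith
    _ = (2 * h) ^ (q - 1) * (2 * h) := hmulpow.symm
    _ = 1 * ((2 * h) ^ (q - 1) * (2 * h)) := by ring

lemma aux_step (q β h M₀ a c : ℝ) (hq1 : 1 ≤ q) (hq2 : q < 2) (hh : 0 < h)
    (hM : 0 < M₀) (ha : 0 ≤ a) (hc : 0 ≤ c) (haM : a ≤ M₀) (hcM : c ≤ M₀)
    (hmesh : β < 0 → h ≤ (2 ^ q / (|β| * M₀ ^ (q - 1))) ^ (1 / (2 - q))) :
    0 ≤ (a + c) / h ^ 2 + β * |(c - a) / (2 * h)| ^ q := by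
  have hh2 : (0:ℝ) < h ^ 2 := by positivity
  have h2h : (0:ℝ) < 2 * h := by linarith
  rcases le_or_gt 0 β with hβ | hβ
  · have : 0 ≤ β * |(c - a) / (2 * h)| ^ q :=
      mul_nonneg hβ (Real.rpow_nonneg (abs_nonneg _) q)
    have : 0 ≤ (a + c) / h ^ 2 := by positivity
    linarith [mul_nonneg hβ (Real.rpow_nonneg (abs_nonneg ((c - a) / (2 * h))) q)]
  · set g := |(c - a) / (2 * h)| with hgdef
    have hg0 : 0 ≤ g := abs_nonneg _
    have hca : |c - a| ≤ a + c := by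
      rw [abs_le]; constructor <;> linarith
    have hcaM : |c - a| ≤ M₀ := by
      rw [abs_le]; constructor <;> linarith
    have hg1 : g ≤ (a + c) / (2 * h) := by
      rw [hgdef, abs_div, abs_of_pos h2h]
      exact div_le_div_of_nonneg_right hca h2h.le
    have hg2 : g ≤ M₀ / (2 * h) := by
      rw [hgdef, abs_div, abs_of_pos h2h]
      exact div_le_div_of_nonneg_right hcaM h2h.le
    have key := aux_scalar q β h M₀ hq1 hq2 hh hβ hM (hmesh hβ)
    rcases eq_or_lt_of_le hg0 with hg | hg
    · rw [← hg, Real.zero_rpow (by linarith : q ≠ 0), mul_zero, add_zero]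
      positivity
    · have hgq : g ^ q = g ^ (q - 1) * g := by
        rw [← Real.rpow_add_one (ne_of_gt hg), sub_add_cancel]
      have hbound : g ^ q ≤ (M₀ / (2 * h)) ^ (q - 1) * ((a + c) / (2 * h)) := by
        rw [hgq]
        exact mul_le_mul (Real.rpow_le_rpow hg0 hg2 (by linarith)) hg1 hg0
          (Real.rpow_nonneg (by positivity) _)
      have h1 : β * ((M₀ / (2 * h)) ^ (q - 1) * ((a + c) / (2 * h))) ≤ β * g ^ q :=
        mul_le_mul_of_nonpos_left hbound hβ.le
      have h2 : |β| * (M₀ / (2 * h)) ^ (q - 1) * (1 / (2 * h)) * (a + c) ≤ 1 / h ^ 2 * (a + c) :=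
        mul_le_mul_of_nonneg_right key (by linarith)
      rw [abs_of_neg hβ] at h2
      have : β * ((M₀ / (2 * h)) ^ (q - 1) * ((a + c) / (2 * h)))
          = -(-β * (M₀ / (2 * h)) ^ (q - 1) * (1 / (2 * h)) * (a + c)) := by ring
      rw [this] at h1
      have h3 : (a + c) / h ^ 2 = 1 / h ^ 2 * (a + c) := by ring
      linarith

/-- Positivity of the explicit Euler scheme for `u_t = u_xx + |u|^{p-1}u + β|u_x|^q`
(with symmetric convention at `i = 0`), under the CFL condition `τ ≤ h²/2` and, when
`β < 0`, the mesh restriction `h ≤ (2^q/(|β| M₀^{q-1}))^{1/(2-q)}`. -/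
theorem discrete_positivity
    (p q β h τ : ℝ) (hp : 1 < p) (hq1 : 1 ≤ q) (hq2 : q < 2)
    (hh : 0 < h) (hτ0 : 0 < τ) (hτ : τ ≤ h ^ 2 / 2)
    (I N : ℕ) (hI : 1 ≤ I)
    (V : ℕ → ℕ → ℝ) (M₀ : ℝ)
    (hM₀ : ∀ i n, i ≤ I → n ≤ N → |V i n| ≤ M₀)
    (hmesh : β < 0 → h ≤ (2 ^ q / (|β| * M₀ ^ (q - 1))) ^ (1 / (2 - q)))
    (hint : ∀ i n, 1 ≤ i → i ≤ I - 1 → n < N →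
      V i (n + 1) = V i n + τ * ((V (i - 1) n - 2 * V i n + V (i + 1) n) / h ^ 2 +
        |V i n| ^ (p - 1) * V i n + β * |(V (i + 1) n - V (i - 1) n) / (2 * h)| ^ q))
    (h0 : ∀ n, n < N →
      V 0 (n + 1) = V 0 n + τ * ((2 * V 1 n - 2 * V 0 n) / h ^ 2 +
        |V 0 n| ^ (p - 1) * V 0 n + β * |(0 : ℝ)| ^ q))
    (hinit : ∀ i, i ≤ I → 0 ≤ V i 0)
    (hbdry : ∀ n, n ≤ N → 0 ≤ V I n) :
    ∀ i n, i ≤ I → n ≤ N → 0 ≤ V i n := by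
  have hh2 : (0:ℝ) < h ^ 2 := by positivity
  have hM00 : 0 ≤ M₀ := le_trans (abs_nonneg _) (hM₀ 0 0 (Nat.zero_le I) (Nat.zero_le N))
  rcases eq_or_lt_of_le hM00 with hM0 | hM0
  · -- M₀ = 0 : everything vanishes
    intro i n hi hn
    have := hM₀ i n hi hn
    rw [← hM0] at this
    have := abs_nonpos_iff.mp this
    simp [this]
  · -- main case
    have hcfl : 0 ≤ 1 - 2 * τ / h ^ 2 := by
      rw [sub_nonneg, div_le_one hh2]; linarith
    suffices H : ∀ n, n ≤ N → ∀ i, i ≤ I → 0 ≤ V i n by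
      exact fun i n hi hn => H n hn i hi
    intro n
    induction n with
    | zero => exact fun _ i hi => hinit i hi
    | succ n ih =>
      intro hn i hi
      have hnN : n < N := hn
      have ihn : ∀ i, i ≤ I → 0 ≤ V i n := ih hnN.le
      -- a helper for the source term
      have hsrc : ∀ x : ℝ, 0 ≤ x → 0 ≤ |x| ^ (p - 1) * x :=
        fun x hx => mul_nonneg (Real.rpow_nonneg (abs_nonneg x) _) hx
      rcases eq_or_lt_of_le hi with hiI | hiI
      · rw [hiI]; exact hbdry _ hn
      · have hiI' : i < I := hiI
        rcases Nat.eq_zero_or_pos i with hi0 | hi1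
        · -- boundary i = 0
          subst hi0
          rw [h0 n hnN, abs_zero, Real.zero_rpow (by linarith : q ≠ 0), mul_zero, add_zero]
          have h1I : 1 ≤ I := hI
          have hV0 : 0 ≤ V 0 n := ihn 0 (Nat.zero_le I)
          have hV1 : 0 ≤ V 1 n := ihn 1 h1I
          have : V 0 n + τ * ((2 * V 1 n - 2 * V 0 n) / h ^ 2 + |V 0 n| ^ (p - 1) * V 0 n)
              = (1 - 2 * τ / h ^ 2) * V 0 n + (2 * τ / h ^ 2) * V 1 n
                + τ * (|V 0 n| ^ (p - 1) * V 0 n) := by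
            field_simp; ring
          rw [this]
          have := hsrc (V 0 n) hV0
          positivity
        · -- interior
          have hile : i ≤ I - 1 := Nat.le_sub_one_of_lt hiI'
          have hia : i - 1 ≤ I := le_trans (Nat.sub_le i 1) hi
          have hic : i + 1 ≤ I := hiI'
          have ha : 0 ≤ V (i - 1) n := ihn _ hia
          have hb : 0 ≤ V i n := ihn _ hi
          have hc : 0 ≤ V (i + 1) n := ihn _ hic
          have haM : V (i - 1) n ≤ M₀ := le_trans (le_abs_self _) (hM₀ _ _ hia hnN.le)
          have hcM : V (i + 1) n ≤ M₀ := le_trans (le_abs_self _) (hM₀ _ _ hic hnN.le)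
          rw [hint i n hi1 hile hnN]
          have hkey := aux_step q β h M₀ (V (i - 1) n) (V (i + 1) n)
            hq1 hq2 hh hM0 ha hc haM hcM hmesh
          have heq : V i n + τ * ((V (i - 1) n - 2 * V i n + V (i + 1) n) / h ^ 2 +
              |V i n| ^ (p - 1) * V i n +
              β * |(V (i + 1) n - V (i - 1) n) / (2 * h)| ^ q)
            = (1 - 2 * τ / h ^ 2) * V i n
              + τ * ((V (i - 1) n + V (i + 1) n) / h ^ 2 +
                  β * |(V (i + 1) n - V (i - 1) n) / (2 * h)| ^ q)
              + τ * (|V i n| ^ (p - 1) * V i n) := by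
            field_simp; ring
          rw [heq]
          have h1 := mul_nonneg hcfl hb
          have h2 := mul_nonneg hτ0.le hkey
          have h3 := mul_nonneg hτ0.le (hsrc _ hb)
          linarith
end

section
/- One-step positivity estimate: Let τ ≤ h²/2, 1 ≤ q < 2, β < 0, and let a, b, c ≥ 0 with max(b, c) ≤ M₀ and h^{2-q} ≤ 2^q/(|β| M₀^{q-1}). Then a + τ[(b - 2a + c)/h² + a^p + β|(c - b)/(2h)|^q] ≥ 0 for any p ≥ 1. -/
/-!
The diffusion part of the update puts weight `1 - 2τ/h² ≥ 0` on `a` and `τ/h²` on `b + c`, and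
the reaction term `τ aᵖ` is nonnegative, so it suffices that the negative gradient term is
absorbed by `τ (b + c)/h²`. Since `|c - b| ≤ max b c`, we get
`|c - b|^q ≤ b^q + c^q ≤ M₀^(q-1) (b + c)`, and the mesh condition
`|β| M₀^(q-1) h^(2-q) ≤ 2^q` turns `|β| |(c - b)/(2h)|^q` into at most `(b + c)/h²`.
-/

open Real

lemma abs_sub_rpow_le_rpow_add_rpow {b c q : ℝ} (hb : 0 ≤ b) (hc : 0 ≤ c) (hq : 0 ≤ q) :
    |c - b| ^ q ≤ b ^ q + c ^ q := by
  have hmax : |c - b| ≤ max b c :=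
    abs_sub_le_of_nonneg_of_le hc (le_max_right b c) hb (le_max_left b c)
  calc |c - b| ^ q ≤ max b c ^ q := rpow_le_rpow (abs_nonneg _) hmax hq
    _ ≤ b ^ q + c ^ q := by
      rcases le_total b c with hbc | hcb
      · rw [max_eq_right hbc]
        linarith [rpow_nonneg hb q]
      · rw [max_eq_left hcb]
        linarith [rpow_nonneg hc q]

lemma rpow_le_rpow_sub_one_mul {x M q : ℝ} (hx : 0 ≤ x) (hxM : x ≤ M) (hq : 1 ≤ q) :
    x ^ q ≤ M ^ (q - 1) * x := by
  have hsplit : x ^ q = x ^ (q - 1) * x := by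
    rw [← rpow_add_one' hx (by linarith), sub_add_cancel]
  rw [hsplit]
  exact mul_le_mul_of_nonneg_right (rpow_le_rpow hx hxM (by linarith)) hx

lemma abs_sub_rpow_le_of_le {b c M q : ℝ} (hb : 0 ≤ b) (hc : 0 ≤ c) (hbM : b ≤ M)
    (hcM : c ≤ M) (hq : 1 ≤ q) : |c - b| ^ q ≤ M ^ (q - 1) * (b + c) :=
  calc |c - b| ^ q ≤ b ^ q + c ^ q := abs_sub_rpow_le_rpow_add_rpow hb hc (by linarith)
    _ ≤ M ^ (q - 1) * b + M ^ (q - 1) * c :=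
      add_le_add (rpow_le_rpow_sub_one_mul hb hbM hq) (rpow_le_rpow_sub_one_mul hc hcM hq)
    _ = M ^ (q - 1) * (b + c) := by ring

lemma mul_abs_div_rpow_le_div_sq {K h q b c M : ℝ} (hK : 0 ≤ K) (hh : 0 < h)
    (hq : 1 ≤ q) (hb : 0 ≤ b) (hc : 0 ≤ c) (hbM : b ≤ M) (hcM : c ≤ M)
    (hmesh : h ^ (2 - q) * (K * M ^ (q - 1)) ≤ 2 ^ q) :
    K * |(c - b) / (2 * h)| ^ q ≤ (b + c) / h ^ 2 := by
  have hsq : h ^ 2 = h ^ (2 - q) * h ^ q := by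
    rw [← rpow_add hh, sub_add_cancel, rpow_two]
  have hscale : |(c - b) / (2 * h)| ^ q = |c - b| ^ q / (2 ^ q * h ^ q) := by
    rw [abs_div, abs_of_pos (show 0 < 2 * h by positivity),
      div_rpow (abs_nonneg _) (by positivity), mul_rpow zero_le_two hh.le]
  rw [hscale, ← mul_div_assoc, div_le_div_iff₀ (by positivity) (by positivity), hsq]
  calc K * |c - b| ^ q * (h ^ (2 - q) * h ^ q)
      ≤ K * (M ^ (q - 1) * (b + c)) * (h ^ (2 - q) * h ^ q) := by
        gcongr
        exact abs_sub_rpow_le_of_le hb hc hbM hcM hq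
    _ = (b + c) * h ^ q * (h ^ (2 - q) * (K * M ^ (q - 1))) := by ring
    _ ≤ (b + c) * h ^ q * 2 ^ q := by gcongr
    _ = (b + c) * (2 ^ q * h ^ q) := by ring

theorem one_step_positivity_general
    (τ h q β a b c M₀ p : ℝ)
    (hτ0 : 0 < τ) (hh : 0 < h) (hτ : τ ≤ h ^ 2 / 2)
    (hq1 : 1 ≤ q) (hβ : β < 0)
    (ha : 0 ≤ a) (hb : 0 ≤ b) (hc : 0 ≤ c)
    (hbM : b ≤ M₀) (hcM : c ≤ M₀)
    (hmesh : h ^ (2 - q) ≤ 2 ^ q / (|β| * M₀ ^ (q - 1))) :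
    0 ≤ a + τ * ((b - 2 * a + c) / h ^ 2 + a ^ p + β * |(c - b) / (2 * h)| ^ q) := by
  have hM₀ : 0 ≤ M₀ := hb.trans hbM
  have hgrad : |β| * |(c - b) / (2 * h)| ^ q ≤ (b + c) / h ^ 2 :=
    mul_abs_div_rpow_le_div_sq (abs_nonneg β) hh hq1 hb hc hbM hcM
      (mul_le_of_le_div₀ (by positivity) (by positivity) hmesh)
  have hrhs : -(2 * a / h ^ 2) ≤
      (b - 2 * a + c) / h ^ 2 + a ^ p + β * |(c - b) / (2 * h)| ^ q := by
    have hsplit : (b - 2 * a + c) / h ^ 2 = -(2 * a / h ^ 2) + (b + c) / h ^ 2 := by ring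
    rw [abs_of_neg hβ] at hgrad
    linarith [rpow_nonneg ha p]
  have hdiffusion : τ * (2 * a / h ^ 2) ≤ a := by
    rw [← mul_div_assoc, div_le_iff₀ (by positivity)]
    nlinarith
  linarith [mul_le_mul_of_nonneg_left hrhs hτ0.le]

/-- One-step positivity of the explicit Euler update: for `τ ≤ h²/2`, `1 ≤ q < 2`,
`β < 0`, `a, b, c ≥ 0` with `max(b,c) ≤ M₀` and `h^{2-q} ≤ 2^q/(|β| M₀^{q-1})`,
one has `a + τ[(b - 2a + c)/h² + a^p + β|(c-b)/(2h)|^q] ≥ 0` for any `p ≥ 1`. -/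
theorem one_step_positivity
    (τ h q β a b c M₀ p : ℝ)
    (hτ0 : 0 < τ) (hh : 0 < h) (hτ : τ ≤ h ^ 2 / 2)
    (hq1 : 1 ≤ q) (hq2 : q < 2) (hβ : β < 0)
    (ha : 0 ≤ a) (hb : 0 ≤ b) (hc : 0 ≤ c)
    (hbM : b ≤ M₀) (hcM : c ≤ M₀)
    (hmesh : h ^ (2 - q) ≤ 2 ^ q / (|β| * M₀ ^ (q - 1)))
    (hp : 1 ≤ p) :
    0 ≤ a + τ * ((b - 2 * a + c) / h ^ 2 + a ^ p + β * |(c - b) / (2 * h)| ^ q) :=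
  one_step_positivity_general τ h q β a b c M₀ p hτ0 hh hτ hq1 hβ ha hb hc hbM hcM hmesh
end
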